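/- When a firm's capacity is greater than or equal to its peak, the firm cannot strictly improve its outcome under any stable matching algorithm by increasing its capacity: for any capacity b > c_f ≥ p_f and any stable matching μ' of the instance with capacity b, the firm's match μ'(f) is weakly worse for f than its match under the original instance's chosen stable matching when that matching is the firm-optimal one, and in fact μ'(f) equals the firm's worker-optimal match at peak. -/

import Mathlib

/-- A many-to-one matching instance: firms `F` with capacities, workers `W`,
strict preferences of workers over `Option F` (`none` = unmatched), strict
preferences of firms over individual workers (`Option W`, `none` = keeping a
seat empty) together with a responsive extension to sets of workers. -/
structure MTO (F W : Type) [DecidableEq W] where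
  cap : F → ℕ
  /-- `wlt w a b` : worker `w` strictly prefers `a` to `b`. -/
  wlt : W → Option F → Option F → Prop
  wlt_trans : ∀ w a b c, wlt w a b → wlt w b c → wlt w a c
  wlt_irrefl : ∀ w a, ¬ wlt w a a
  wlt_trichot : ∀ w a b, a = b ∨ wlt w a b ∨ wlt w b a
  /-- `flt1 f a b` : firm `f` strictly prefers (single) worker option `a` to `b`. -/
  flt1 : F → Option W → Option W → Prop
  flt1_trans : ∀ f a b c, flt1 f a b → flt1 f b c → flt1 f a c
  flt1_irrefl : ∀ f a, ¬ flt1 f a a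
  flt1_trichot : ∀ f a b, a = b ∨ flt1 f a b ∨ flt1 f b a
  /-- `flt f S T` : firm `f` strictly prefers the set `S` to the set `T`
  (responsive extension of `flt1`). -/
  flt : F → Finset W → Finset W → Prop
  flt_trans : ∀ f S T U, flt f S T → flt f T U → flt f S U
  flt_irrefl : ∀ f S, ¬ flt f S S
  resp_add : ∀ f (S : Finset W) (w : W), w ∉ S →
    (flt f (insert w S) S ↔ flt1 f (some w) none)
  resp_swap : ∀ f (S : Finset W) (w w' : W), w ∉ S → w' ∉ S → w ≠ w' →
    (flt f (insert w S) (insert w' S) ↔ flt1 f (some w) (some w'))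

variable {F W : Type} [DecidableEq W] [DecidableEq F] [Fintype W]

/-- The set of workers matched to firm `f` under the matching `μ`. -/
def matchedSet (μ : W → Option F) (f : F) : Finset W :=
  Finset.univ.filter (fun w => μ w = some f)

/-- `μ` respects all capacity constraints. -/
def MTO.isMatching (I : MTO F W) (μ : W → Option F) : Prop :=
  ∀ f, (matchedSet μ f).card ≤ I.cap f

/-- No agent is matched to an unacceptable partner. -/
def MTO.indivRational (I : MTO F W) (μ : W → Option F) : Prop :=
  (∀ w f, μ w = some f → ¬ I.wlt w none (some f)) ∧
  (∀ w f, μ w = some f → ¬ I.flt1 f none (some w))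

/-- The worker-firm pair `(w, f)` blocks `μ`. -/
def MTO.blocks (I : MTO F W) (μ : W → Option F) (w : W) (f : F) : Prop :=
  I.wlt w (some f) (μ w) ∧
  ∃ S ⊆ matchedSet μ f, (insert w S).card ≤ I.cap f ∧
    I.flt f (insert w S) (matchedSet μ f)

/-- Stability: a feasible, individually rational matching with no blocking pair. -/
def MTO.isStable (I : MTO F W) (μ : W → Option F) : Prop :=
  I.isMatching μ ∧ I.indivRational μ ∧ ∀ w f, ¬ I.blocks μ w f

/-- `μ` is the worker-optimal stable matching (output of WPDA). -/
def MTO.workerOptimal (I : MTO F W) (μ : W → Option F) : Prop :=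
  I.isStable μ ∧ ∀ μ', I.isStable μ' → ∀ w, μ' w = μ w ∨ I.wlt w (μ w) (μ' w)

/-- `μ` is the firm-optimal stable matching (output of FPDA). -/
def MTO.firmOptimal (I : MTO F W) (μ : W → Option F) : Prop :=
  I.isStable μ ∧ ∀ μ', I.isStable μ' → ∀ f,
    matchedSet μ' f = matchedSet μ f ∨ I.flt f (matchedSet μ f) (matchedSet μ' f)

/-- The instance obtained from `I` by setting the capacity of firm `f` to `b`. -/
def MTO.withCap (I : MTO F W) (f : F) (b : ℕ) : MTO F W :=
  { I with cap := Function.update I.cap f b }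

/-- The peak of firm `f`: the largest number of workers matched to `f` in any
stable matching for any choice of `f`'s capacity. -/
noncomputable def MTO.peak (I : MTO F W) (f : F) : ℕ :=
  sSup {n | ∃ b μ, (I.withCap f b).isStable μ ∧ (matchedSet μ f).card = n}

/-- `w` proposes to `f` at some point of WPDA, where `μ` is the worker-optimal
stable matching (i.e. the WPDA outcome): `w` finds `f` acceptable and `f` is
weakly preferred by `w` to its final WPDA match. -/
def MTO.proposesTo (I : MTO F W) (μ : W → Option F) (w : W) (f : F) : Prop :=
  I.wlt w (some f) none ∧ (μ w = some f ∨ I.wlt w (some f) (μ w))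

/-- All workers in `S` are acceptable to `f`. -/
def MTO.acceptableSet (I : MTO F W) (f : F) (S : Finset W) : Prop :=
  ∀ w ∈ S, ¬ I.flt1 f none (some w)

/-- Strongly monotone preferences: any larger acceptable set is strictly
preferred to any smaller acceptable set. -/
def MTO.stronglyMonotone (I : MTO F W) (f : F) : Prop :=
  ∀ S T : Finset W, I.acceptableSet f S → I.acceptableSet f T →
    T.card < S.card → I.flt f S T


/-!
Let `μpk` be the worker-optimal stable matching at peak capacity. A stable matching `μ'` at
capacity `b` gives `f` at most `peak ≤ c_f < b` workers, so it is also stable at peak and in the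
original instance, and every worker weakly prefers `μpk` to `μ'`. Since `f` has a free seat
in `μ'`, a worker of `μpk(f)` missing from `μ'(f)` would block `μ'`; hence `μpk(f) ⊆ μ'(f)`.
The same blocking argument shows that, at peak capacity, no firm gets more workers from `μpk`
than from `μ'`, and a worker unmatched in `μpk` is unmatched in `μ'`; as both matchings
partition the same set of workers, all these counts agree (rural hospitals). So
`|μpk(f)| = |μ'(f)|`, whence `μ'(f) = μpk(f)`, and firm optimality of `μF` in the original
instance gives the comparison.
-/

open Finset

theorem card_fiber_eq_of_forall_card_fiber_le {α β : Type*} [Fintype α] [DecidableEq β]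
    {μ ν : α → β} (h : ∀ b, #{a | ν a = b} ≤ #{a | μ a = b}) (b : β) :
    #{a | ν a = b} = #{a | μ a = b} := by
  set t := insert b (univ.image μ ∪ univ.image ν)
  have hμ : #(univ : Finset α) = ∑ c ∈ t, #{a | μ a = c} :=
    card_eq_sum_card_fiberwise fun a _ => by simp [t]
  have hν : #(univ : Finset α) = ∑ c ∈ t, #{a | ν a = c} :=
    card_eq_sum_card_fiberwise fun a _ => by simp [t]
  exact (sum_eq_sum_iff_of_le fun c _ => h c).mp (hν.symm.trans hμ) b (mem_insert_self b _)

theorem mem_matchedSet {F W : Type} [DecidableEq F] [Fintype W] {μ : W → Option F} {g : F}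
    {w : W} :
    w ∈ matchedSet μ g ↔ μ w = some g := by
  simp [matchedSet]

namespace MTO

def workersWeaklyPrefer {F W : Type} [DecidableEq W] (I : MTO F W) (ν μ : W → Option F) :
    Prop :=
  ∀ w, μ w = ν w ∨ I.wlt w (ν w) (μ w)

theorem flt1_some_none_of_not_flt1_none_some {F W : Type} [DecidableEq W] (I : MTO F W) {g : F}
    {w : W} (h : ¬ I.flt1 g none (some w)) : I.flt1 g (some w) none := by
  rcases I.flt1_trichot g (some w) none with h' | h' | h'
  · simp at h'
  · exact h'
  · exact absurd h' h

theorem blocks_of_card_lt_cap (I : MTO F W) {μ : W → Option F} {w : W} {g : F}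
    (hw : I.wlt w (some g) (μ w)) (hg : I.flt1 g (some w) none)
    (hcap : #(matchedSet μ g) < I.cap g) : I.blocks μ w g := by
  have hwS : w ∉ matchedSet μ g := fun hmem =>
    I.wlt_irrefl w _ (by rwa [mem_matchedSet.mp hmem] at hw)
  refine ⟨hw, matchedSet μ g, Subset.rfl, ?_, (I.resp_add g _ w hwS).mpr hg⟩
  rw [card_insert_of_notMem hwS]
  omega

theorem matchedSet_subset_of_card_lt_cap (I : MTO F W) {μ ν : W → Option F}
    (hμ : I.isStable μ) (hν : I.indivRational ν) (hpref : I.workersWeaklyPrefer ν μ) {g : F}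
    (hcap : #(matchedSet μ g) < I.cap g) : matchedSet ν g ⊆ matchedSet μ g := by
  intro w hw
  rw [mem_matchedSet] at hw ⊢
  by_contra hne
  have hwg : I.wlt w (some g) (μ w) := by
    rcases hpref w with h | h
    · exact absurd (h.trans hw) hne
    · rwa [hw] at h
  exact hμ.2.2 w g
    (I.blocks_of_card_lt_cap hwg (I.flt1_some_none_of_not_flt1_none_some (hν.2 w g hw)) hcap)

theorem card_matchedSet_le_of_workersWeaklyPrefer (I : MTO F W) {μ ν : W → Option F}
    (hμ : I.isStable μ) (hν : I.isStable ν) (hpref : I.workersWeaklyPrefer ν μ) (g : F) :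
    #(matchedSet ν g) ≤ #(matchedSet μ g) := by
  by_contra! hlt
  have hsub := I.matchedSet_subset_of_card_lt_cap hμ hν.2.1 hpref (hlt.trans_le (hν.1 g))
  exact (card_le_card hsub).not_gt hlt

theorem eq_none_of_workersWeaklyPrefer {F W : Type} [DecidableEq W] (I : MTO F W)
    {μ ν : W → Option F} (hμ : I.indivRational μ) (hpref : I.workersWeaklyPrefer ν μ)
    {w : W} (hw : ν w = none) : μ w = none := by
  rcases hpref w with h | h
  · rw [h, hw]
  · rw [hw] at h
    cases hμw : μ w with
    | none => rfl
    | some g => exact absurd (hμw ▸ h) (hμ.1 w g hμw)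

theorem card_matchedSet_eq_of_workersWeaklyPrefer (I : MTO F W) {μ ν : W → Option F}
    (hμ : I.isStable μ) (hν : I.isStable ν) (hpref : I.workersWeaklyPrefer ν μ) (g : F) :
    #(matchedSet ν g) = #(matchedSet μ g) := by
  refine card_fiber_eq_of_forall_card_fiber_le (μ := μ) (ν := ν) (fun o => ?_) (some g)
  cases o with
  | none =>
    exact card_le_card fun w hw => by
      simp only [mem_filter, mem_univ, true_and] at hw ⊢
      exact I.eq_none_of_workersWeaklyPrefer hμ.2.1 hpref hw
  | some g => exact I.card_matchedSet_le_of_workersWeaklyPrefer hμ hν hpref g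

@[simp]
theorem withCap_cap_self {F W : Type} [DecidableEq W] [DecidableEq F] (I : MTO F W) (f : F) :
    I.withCap f (I.cap f) = I := by
  cases I
  simp [withCap]

@[simp]
theorem withCap_withCap {F W : Type} [DecidableEq W] [DecidableEq F] (I : MTO F W) (f : F)
    (b c : ℕ) :
    (I.withCap f b).withCap f c = I.withCap f c := by
  simp [withCap]

@[simp]
theorem withCap_cap {F W : Type} [DecidableEq W] [DecidableEq F] (I : MTO F W) (f : F) (b : ℕ) :
    (I.withCap f b).cap f = b := by
  simp [withCap]

theorem withCap_cap_le {F W : Type} [DecidableEq W] [DecidableEq F] (I : MTO F W) {f : F} {c : ℕ}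
    (hc : c ≤ I.cap f) (g : F) :
    (I.withCap f c).cap g ≤ I.cap g := by
  by_cases hg : g = f
  · subst hg
    simpa using hc
  · simp [withCap, hg]

theorem isStable_withCap_of_card_le (I : MTO F W) {f : F} {c : ℕ} {μ : W → Option F}
    (hμ : I.isStable μ) (hμc : #(matchedSet μ f) ≤ c) (hc : c ≤ I.cap f) :
    (I.withCap f c).isStable μ := by
  refine ⟨fun g => ?_, hμ.2.1, fun w g ⟨hw, S, hS, hcard, hflt⟩ =>
    hμ.2.2 w g ⟨hw, S, hS, hcard.trans (I.withCap_cap_le hc g), hflt⟩⟩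
  by_cases hg : g = f
  · subst hg
    simpa using hμc
  · simpa [withCap, hg] using hμ.1 g

theorem card_matchedSet_le_peak (I : MTO F W) {f : F} {b : ℕ} {μ : W → Option F}
    (hμ : (I.withCap f b).isStable μ) : #(matchedSet μ f) ≤ I.peak f :=
  le_csSup ⟨Fintype.card W, by rintro n ⟨-, ν, -, rfl⟩; exact card_le_univ _⟩
    ⟨b, μ, hμ, rfl⟩

end MTO

/-- At or above peak, increasing capacity cannot improve the firm under any
stable matching algorithm: for any capacity `b > c_f ≥ p_f` and any stable
matching of the enlarged instance, the firm's match equals its worker-optimal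
match at peak, and is weakly worse than its firm-optimal match in the original
instance. -/
theorem add_capacity_useless_at_or_above_peak
    {F W : Type} [DecidableEq W] [DecidableEq F] [Fintype W]
    (I : MTO F W) (f : F) (hpeak : I.peak f ≤ I.cap f)
    (b : ℕ) (hb : I.cap f < b)
    (μ' : W → Option F) (hμ' : (I.withCap f b).isStable μ')
    (μF : W → Option F) (hF : I.firmOptimal μF)
    (μpk : W → Option F) (hpk : (I.withCap f (I.peak f)).workerOptimal μpk) :
    matchedSet μ' f = matchedSet μpk f ∧
    (matchedSet μ' f = matchedSet μF f ∨
      I.flt f (matchedSet μF f) (matchedSet μ' f)) := by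
  have hle_peak : #(matchedSet μ' f) ≤ I.peak f := I.card_matchedSet_le_peak hμ'
  have hμ'_peak : (I.withCap f (I.peak f)).isStable μ' := by
    simpa using (I.withCap f b).isStable_withCap_of_card_le hμ' hle_peak
      (by rw [MTO.withCap_cap]; omega)
  have hμ'_orig : I.isStable μ' := by
    simpa using (I.withCap f b).isStable_withCap_of_card_le hμ' (hle_peak.trans hpeak)
      (by rw [MTO.withCap_cap]; omega)
  have hpref : (I.withCap f (I.peak f)).workersWeaklyPrefer μpk μ' := hpk.2 μ' hμ'_peak
  have hsub : matchedSet μpk f ⊆ matchedSet μ' f :=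
    (I.withCap f b).matchedSet_subset_of_card_lt_cap hμ' hpk.1.2.1 hpref
      (by rw [MTO.withCap_cap]; omega)
  have hcard := (I.withCap f (I.peak f)).card_matchedSet_eq_of_workersWeaklyPrefer
    hμ'_peak hpk.1 hpref f
  exact ⟨(eq_of_subset_of_card_le hsub hcard.ge).symm, hF.2 μ' hμ'_orig f⟩
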